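/- Let γ > 0, n ∈ ℕ, and fix w ∈ 𝔻. Define g_w = (γ+n+2)/(γ+n+1)·∏_{j=0}^{n-1}(γ+j+1)(γ+j+2)·l₁ − (2γ+2n+3)/(γ+n+1)·∏_{j=0}^{n-1}(γ+j)(γ+j+2)·l₂ + ∏_{j=0}^{n-1}(γ+j)(γ+j+1)·l₃, where l_i(z) = (1-|w|²)^i/(1-conj(w)·z)^{γ+i-1}. Then g_w^{(n)}(w) = 0, g_w^{(n+2)}(w) = 0, and g_w^{(n+1)}(w) = −[∏_{j=0}^{n-1}(γ+j)(γ+j+1)(γ+j+2)]/(γ+n+1) · conj(w)^{n+1}/(1-|w|²)^{γ+n}. -/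

import Mathlib

/-!
With `B = 1 - ‖w‖²`, the kernel `l_i` is `B^i (1 - w̄ z)^{-(γ+i-1)}`, and the `k`-th derivative of
`(1 - c z)^{-t}` is `c^k (t)_k (1 - c z)^{-(t+k)}` with `(t)_k` the rising factorial. Because
`1 - w̄ w = B`, all three kernels contribute the same power `B^{1-γ-k}` at `z = w`, so
`g_w^{(k)}(w) = w̄^k B^{1-γ-k} · gCoeff γ n k`, where `gCoeff` combines rising factorials of `γ`,
`γ + 1`, `γ + 2`. For `k = n, n + 1, n + 2` it reduces to a rational identity in `γ + n + 1`.
-/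

open Complex Metric Finset

/-- The kernel `l_i(z) = (1-|w|²)^i / (1 - conj w · z)^(γ+i-1)`. -/
noncomputable def lKernel (w : ℂ) (γ : ℝ) (i : ℕ) (z : ℂ) : ℂ :=
  ((1 - ‖w‖ ^ 2 : ℝ) : ℂ) ^ i / (1 - (starRingEnd ℂ) w * z) ^ ((γ : ℂ) + i - 1)

/-- The test function `g_w`. -/
noncomputable def gTest (w : ℂ) (γ : ℝ) (n : ℕ) (z : ℂ) : ℂ :=
  ((γ : ℂ) + n + 2) / ((γ : ℂ) + n + 1) *
      (∏ j ∈ range n, (((γ : ℂ) + j + 1) * ((γ : ℂ) + j + 2))) * lKernel w γ 1 z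
  - (2 * (γ : ℂ) + 2 * n + 3) / ((γ : ℂ) + n + 1) *
      (∏ j ∈ range n, (((γ : ℂ) + j) * ((γ : ℂ) + j + 2))) * lKernel w γ 2 z
  + (∏ j ∈ range n, (((γ : ℂ) + j) * ((γ : ℂ) + j + 1))) * lKernel w γ 3 z

open Topology Filter ComplexConjugate

section OneSubMulCpow

variable {c : ℂ}

lemma hasDerivAt_one_sub_mul_cpow_neg (t : ℂ) {z : ℂ} (hz : 1 - c * z ∈ slitPlane) :
    HasDerivAt (fun z => (1 - c * z) ^ (-t)) (c * t * (1 - c * z) ^ (-(t + 1))) z := by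
  have h := (((hasDerivAt_id' z).const_mul c).const_sub 1).cpow_const (c := -t) hz
  refine h.congr_deriv ?_
  rw [show -t - 1 = -(t + 1) by ring]
  ring

lemma iteratedDeriv_one_sub_mul_cpow_neg (k : ℕ) (t : ℂ) {z : ℂ} (hz : 1 - c * z ∈ slitPlane) :
    iteratedDeriv k (fun z => (1 - c * z) ^ (-t)) z =
      c ^ k * (∏ j ∈ range k, (t + j)) * (1 - c * z) ^ (-(t + k)) := by
  induction k generalizing t with
  | zero => simp
  | succ k ih =>
    have hU : {z : ℂ | 1 - c * z ∈ slitPlane} ∈ 𝓝 z :=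
      (isOpen_slitPlane.preimage (by fun_prop)).mem_nhds hz
    have hderiv : deriv (fun z => (1 - c * z) ^ (-t)) =ᶠ[𝓝 z]
        fun z => c * t * (1 - c * z) ^ (-(t + 1)) :=
      eventually_of_mem hU fun u hu => (hasDerivAt_one_sub_mul_cpow_neg t hu).deriv
    rw [iteratedDeriv_succ', (hderiv.iteratedDeriv k).eq_of_nhds, iteratedDeriv_const_mul_field,
      ih (t + 1), prod_range_succ']
    push_cast
    ring_nf

end OneSubMulCpow

section Kernel

variable {w : ℂ}

lemma one_sub_conj_mul_self (w : ℂ) : 1 - conj w * w = ((1 - ‖w‖ ^ 2 : ℝ) : ℂ) := by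
  rw [conj_mul']
  push_cast
  ring

lemma one_sub_norm_sq_pos (hw : ‖w‖ < 1) : (0 : ℝ) < 1 - ‖w‖ ^ 2 := by
  nlinarith [norm_nonneg w]

lemma one_sub_conj_mul_self_mem_slitPlane (hw : ‖w‖ < 1) : 1 - conj w * w ∈ slitPlane := by
  rw [one_sub_conj_mul_self]
  exact ofReal_mem_slitPlane.mpr (one_sub_norm_sq_pos hw)

lemma lKernel_eq (w : ℂ) (γ : ℝ) (i : ℕ) :
    lKernel w γ i =
      fun z => ((1 - ‖w‖ ^ 2 : ℝ) : ℂ) ^ i * (1 - conj w * z) ^ (-((γ : ℂ) + i - 1)) := by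
  funext z
  simp only [lKernel, cpow_neg, div_eq_mul_inv]

lemma contDiffAt_lKernel (γ : ℝ) (i : ℕ) {m : WithTop ℕ∞} (hw : ‖w‖ < 1) :
    ContDiffAt ℂ m (lKernel w γ i) w := by
  rw [lKernel_eq]
  exact (analyticAt_const.mul ((analyticAt_const.sub (analyticAt_const.mul analyticAt_id)).cpow
    analyticAt_const (one_sub_conj_mul_self_mem_slitPlane hw))).contDiffAt

lemma iteratedDeriv_lKernel_self (γ : ℝ) (i k : ℕ) (hw : ‖w‖ < 1) :
    iteratedDeriv k (lKernel w γ i) w =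
      conj w ^ k * (∏ j ∈ range k, ((γ : ℂ) + i - 1 + j)) *
        ((1 - ‖w‖ ^ 2 : ℝ) : ℂ) ^ (1 - (γ : ℂ) - k) := by
  have hB : ((1 - ‖w‖ ^ 2 : ℝ) : ℂ) ≠ 0 := ofReal_ne_zero.mpr (one_sub_norm_sq_pos hw).ne'
  have hpow : ((1 - ‖w‖ ^ 2 : ℝ) : ℂ) ^ i * ((1 - ‖w‖ ^ 2 : ℝ) : ℂ) ^ (-((γ : ℂ) + i - 1 + k)) =
      ((1 - ‖w‖ ^ 2 : ℝ) : ℂ) ^ (1 - (γ : ℂ) - k) := by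
    rw [← cpow_natCast, ← cpow_add _ _ hB]
    ring_nf
  rw [lKernel_eq, iteratedDeriv_const_mul_field,
    iteratedDeriv_one_sub_mul_cpow_neg k _ (one_sub_conj_mul_self_mem_slitPlane hw),
    one_sub_conj_mul_self]
  linear_combination (conj w ^ k * ∏ j ∈ range k, ((γ : ℂ) + i - 1 + j)) * hpow

end Kernel

section Coefficients

noncomputable def gCoeff (x : ℂ) (n k : ℕ) : ℂ :=
  (x + n + 2) / (x + n + 1) * (∏ j ∈ range n, ((x + j + 1) * (x + j + 2))) *
      ∏ j ∈ range k, (x + j)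
    - (2 * x + 2 * n + 3) / (x + n + 1) * (∏ j ∈ range n, ((x + j) * (x + j + 2))) *
      ∏ j ∈ range k, (x + j + 1)
    + (∏ j ∈ range n, ((x + j) * (x + j + 1))) * ∏ j ∈ range k, (x + j + 2)

variable {x : ℂ} {n : ℕ}

lemma gCoeff_self (hx : x + n + 1 ≠ 0) : gCoeff x n n = 0 := by
  simp only [gCoeff, prod_mul_distrib]
  field_simp
  ring

lemma gCoeff_add_one (hx : x + n + 1 ≠ 0) :
    gCoeff x n (n + 1) =
      -((∏ j ∈ range n, ((x + j) * (x + j + 1) * (x + j + 2))) / (x + n + 1)) := by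
  simp only [gCoeff, prod_mul_distrib, prod_range_succ]
  field_simp
  ring

lemma gCoeff_add_two (hx : x + n + 1 ≠ 0) : gCoeff x n (n + 2) = 0 := by
  simp only [gCoeff, prod_mul_distrib, prod_range_succ]
  field_simp
  push_cast
  ring

end Coefficients

lemma iteratedDeriv_gTest_self {w : ℂ} (γ : ℝ) (n k : ℕ) (hw : ‖w‖ < 1) :
    iteratedDeriv k (gTest w γ n) w =
      conj w ^ k * ((1 - ‖w‖ ^ 2 : ℝ) : ℂ) ^ (1 - (γ : ℂ) - k) * gCoeff γ n k := by
  have hK (i : ℕ) (a : ℂ) : ContDiffAt ℂ k (fun z => a * lKernel w γ i z) w :=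
    contDiffAt_const.mul (contDiffAt_lKernel γ i hw)
  unfold gTest
  rw [iteratedDeriv_fun_add ((hK 1 _).sub (hK 2 _)) (hK 3 _),
    iteratedDeriv_fun_sub (hK 1 _) (hK 2 _)]
  simp only [iteratedDeriv_const_mul_field, iteratedDeriv_lKernel_self _ _ _ hw, gCoeff]
  push_cast
  ring_nf

theorem gTest_derivs (γ : ℝ) (hγ : 0 < γ) (n : ℕ) (w : ℂ)
    (hw : w ∈ ball (0:ℂ) 1) :
    iteratedDeriv n (gTest w γ n) w = 0 ∧
    iteratedDeriv (n + 2) (gTest w γ n) w = 0 ∧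
    iteratedDeriv (n + 1) (gTest w γ n) w =
      -((∏ j ∈ range n, (((γ : ℂ) + j) * ((γ : ℂ) + j + 1) * ((γ : ℂ) + j + 2))) /
          ((γ : ℂ) + n + 1)) *
        ((starRingEnd ℂ) w) ^ (n + 1) /
        ((1 - ‖w‖ ^ 2 : ℝ) : ℂ) ^ ((γ : ℂ) + n) := by
  have hw1 : ‖w‖ < 1 := mem_ball_zero_iff.mp hw
  have hx : (γ : ℂ) + n + 1 ≠ 0 := by exact_mod_cast (by positivity : γ + n + 1 ≠ 0)
  refine ⟨?_, ?_, ?_⟩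
  · rw [iteratedDeriv_gTest_self γ n n hw1, gCoeff_self hx, mul_zero]
  · rw [iteratedDeriv_gTest_self γ n (n + 2) hw1, gCoeff_add_two hx, mul_zero]
  · rw [iteratedDeriv_gTest_self γ n (n + 1) hw1, gCoeff_add_one hx,
      show 1 - (γ : ℂ) - ((n + 1 : ℕ) : ℂ) = -((γ : ℂ) + n) by push_cast; ring, cpow_neg]
    ring
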